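/- Let a_1,…,a_n be distinct nonzero real numbers and P(x) = ∏_{j=1}^n (x − a_j). Then for every (x_1,…,x_{n+1}) ∈ ℝ^{n+1}: P_{n+1}(x_1,…,x_{n+1}) − J^a_{n+1}(x_1,…,x_n) = ((−1)^n/(n+1)) · L(P)(x_1,…,x_{n+1}). In particular, P_{n+1}(1, x, x²,…, x^n) − J^a_{n+1}(1, x,…, x^{n−1}) = ((−1)^n/(n+1)) P(x) for every x ∈ ℝ. -/

import Mathlib

/-- The Kailath–Segall polynomials, defined by `P₀ = 1` and the recurrence
`Pₙ = (1/n)(Pₙ₋₁ x₁ − Pₙ₋₂ x₂ + ⋯ + (−1)^{n+1} P₀ xₙ)`. -/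
noncomputable def KS {A : Type*} [CommRing A] [Algebra ℚ A] (x : ℕ → A) : ℕ → A
  | 0 => 1
  | n + 1 =>
      (((n : ℚ) + 1)⁻¹) •
        ∑ j ∈ Finset.range (n + 1), ((-1 : A) ^ j * KS x (n - j) * x (j + 1))
  termination_by n => n
  decreasing_by omega

/-- For `P(x) = c₀ + c₁ x + ⋯ + cₘ xᵐ` of degree `m`,
`L(P)(x₁,…,x_{m+1}) = c₀ x₁ + ⋯ + cₘ x_{m+1}` (arguments indexed from 1). -/
noncomputable def Lpoly (P : Polynomial ℝ) (x : ℕ → ℝ) : ℝ :=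
  ∑ i ∈ Finset.range (P.natDegree + 1), P.coeff i * x (i + 1)

/-!
Only the last term of the Kailath–Segall recurrence sees the coordinate `x_{n+1}`, so two
argument sequences that agree in the first `n` places give values of `P_{n+1}` differing by
`((-1)ⁿ/(n+1)) (x_{n+1} - x'_{n+1})`. For `J^a_{n+1}` this difference is `x_{n+1} - u_{n+1}`.
On the other hand `L(P)` applied to a moment sequence `k ↦ Σ_j a_j^k y_j` is
`Σ_j a_j P(a_j) y_j = 0`, and since `P` is monic of degree `n`, `L(P)(x)` only changes by
`x_{n+1} - x'_{n+1}` when the first `n` places are kept; hence `L(P)(x) = x_{n+1} - u_{n+1}`.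
-/

open Polynomial

section KailathSegall

variable {A : Type*} [CommRing A] [Algebra ℚ A]

theorem KS_congr {x x' : ℕ → A} (m : ℕ) (h : ∀ k, 1 ≤ k → k ≤ m → x k = x' k) :
    KS x m = KS x' m := by
  induction m using Nat.strong_induction_on with
  | _ m ih =>
    match m with
    | 0 => rw [KS, KS]
    | n + 1 =>
      rw [KS, KS]
      refine congrArg _ (Finset.sum_congr rfl fun j hj => ?_)
      rw [Finset.mem_range] at hj
      rw [ih (n - j) (by omega) fun k h1 h2 => h k h1 (by omega),
        h (j + 1) (by omega) (by omega)]

theorem KS_zero (x : ℕ → A) : KS x 0 = 1 := by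
  rw [KS]

end KailathSegall

theorem KS_succ_sub_KS_succ {K : Type*} [Field K] [CharZero K] (n : ℕ) {x x' : ℕ → K}
    (h : ∀ k, 1 ≤ k → k ≤ n → x k = x' k) :
    KS x (n + 1) - KS x' (n + 1) = (-1) ^ n / (n + 1) * (x (n + 1) - x' (n + 1)) := by
  have hlower : ∑ j ∈ Finset.range n, (-1) ^ j * KS x (n - j) * x (j + 1)
      = ∑ j ∈ Finset.range n, (-1) ^ j * KS x' (n - j) * x' (j + 1) := by
    refine Finset.sum_congr rfl fun j hj => ?_
    rw [Finset.mem_range] at hj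
    rw [KS_congr (n - j) fun k h1 h2 => h k h1 (by omega), h (j + 1) (by omega) (by omega)]
  rw [KS, KS, Finset.sum_range_succ, Finset.sum_range_succ, hlower, Nat.sub_self,
    KS_zero, KS_zero, Rat.smul_def, Rat.smul_def]
  push_cast
  ring

section Lpoly

theorem Lpoly_moments {ι : Type*} [Fintype ι] (P : ℝ[X]) (a y : ι → ℝ) :
    Lpoly P (fun k => ∑ j, a j ^ k * y j) = ∑ j, a j * P.eval (a j) * y j := by
  simp only [Lpoly, eval_eq_sum_range, Finset.mul_sum, Finset.sum_mul]
  rw [Finset.sum_comm]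
  refine Finset.sum_congr rfl fun j _ => Finset.sum_congr rfl fun i _ => ?_
  ring

theorem Lpoly_sub_Lpoly_of_monic {P : ℝ[X]} (hP : P.Monic) {n : ℕ} (hn : P.natDegree = n)
    {x x' : ℕ → ℝ} (h : ∀ k, 1 ≤ k → k ≤ n → x k = x' k) :
    Lpoly P x - Lpoly P x' = x (n + 1) - x' (n + 1) := by
  have hlower : ∑ i ∈ Finset.range n, P.coeff i * x (i + 1)
      = ∑ i ∈ Finset.range n, P.coeff i * x' (i + 1) := by
    refine Finset.sum_congr rfl fun i hi => ?_
    rw [Finset.mem_range] at hi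
    rw [h (i + 1) (by omega) (by omega)]
  have hlead : P.coeff n = 1 := hn ▸ hP.coeff_natDegree
  rw [Lpoly, Lpoly, hn, Finset.sum_range_succ, Finset.sum_range_succ, hlower, hlead]
  ring

theorem Lpoly_eq_sub_moment {ι : Type*} [Fintype ι] {P : ℝ[X]} (hP : P.Monic) {n : ℕ}
    (hn : P.natDegree = n) {a : ι → ℝ} (hroot : ∀ j, P.eval (a j) = 0) (x : ℕ → ℝ)
    {y : ι → ℝ} (hx : ∀ k, 1 ≤ k → k ≤ n → x k = ∑ j, a j ^ k * y j) :
    Lpoly P x = x (n + 1) - ∑ j, a j ^ (n + 1) * y j := by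
  have hmoments : Lpoly P (fun k => ∑ j, a j ^ k * y j) = 0 := by
    simp [Lpoly_moments, hroot]
  rw [← Lpoly_sub_Lpoly_of_monic hP hn hx, hmoments, sub_zero]

theorem Lpoly_pow_pred (P : ℝ[X]) (x0 : ℝ) : Lpoly P (fun k => x0 ^ (k - 1)) = P.eval x0 := by
  simp [Lpoly, eval_eq_sum_range]

end Lpoly

theorem kailathSegall_minus_J_general (n : ℕ) (a : Fin n → ℝ) :
    (∀ x : ℕ → ℝ, ∀ y : Fin n → ℝ,
      (∀ k, 1 ≤ k → k ≤ n → x k = ∑ j, a j ^ k * y j) →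
      KS x (n + 1) -
          KS (fun k => if k = n + 1 then ∑ j, a j ^ (n + 1) * y j else x k) (n + 1) =
        ((-1 : ℝ) ^ n / (n + 1)) *
          Lpoly (∏ j, (Polynomial.X - Polynomial.C (a j))) x) ∧
    (∀ x0 : ℝ, ∀ y : Fin n → ℝ,
      (∀ k, 1 ≤ k → k ≤ n → x0 ^ (k - 1) = ∑ j, a j ^ k * y j) →
      KS (fun k => x0 ^ (k - 1)) (n + 1) -
          KS (fun k => if k = n + 1 then ∑ j, a j ^ (n + 1) * y j
            else x0 ^ (k - 1)) (n + 1) =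
        ((-1 : ℝ) ^ n / (n + 1)) *
          Polynomial.eval x0 (∏ j, (Polynomial.X - Polynomial.C (a j)))) := by
  set P : ℝ[X] := ∏ j, (X - C (a j))
  have hP : P.Monic := monic_prod_X_sub_C a Finset.univ
  have hn : P.natDegree = n := by simp [P]
  have hroot : ∀ j, P.eval (a j) = 0 := fun j => by
    simp only [P, eval_prod]
    exact Finset.prod_eq_zero (Finset.mem_univ j) (by simp)
  have general : ∀ x : ℕ → ℝ, ∀ y : Fin n → ℝ,
      (∀ k, 1 ≤ k → k ≤ n → x k = ∑ j, a j ^ k * y j) →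
      KS x (n + 1) -
          KS (fun k => if k = n + 1 then ∑ j, a j ^ (n + 1) * y j else x k) (n + 1) =
        (-1) ^ n / (n + 1) * Lpoly P x := by
    intro x y hx
    rw [KS_succ_sub_KS_succ n fun k _ hk => (if_neg (by omega)).symm, if_pos rfl,
      Lpoly_eq_sub_moment hP hn hroot x hx]
  refine ⟨general, fun x0 y hx => ?_⟩
  rw [general _ y hx, Lpoly_pow_pred]

/-- Let `a₁,…,aₙ` be distinct nonzero reals and `P(x) = ∏_j (x − a_j)`. For
`(x₁,…,x_{n+1}) ∈ ℝ^{n+1}`, with `(y_j)` the (unique) solution of the Vandermonde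
system `x_k = Σ_j a_j^k y_j` (`k = 1,…,n`), `u_{n+1} = Σ_j a_j^{n+1} y_j` and
`J^a_{n+1}(x₁,…,xₙ) = P_{n+1}(x₁,…,xₙ,u_{n+1})`:
`P_{n+1}(x₁,…,x_{n+1}) − J^a_{n+1}(x₁,…,xₙ) = ((−1)ⁿ/(n+1)) L(P)(x₁,…,x_{n+1})`;
in particular `P_{n+1}(1,x,…,xⁿ) − J^a_{n+1}(1,x,…,x^{n−1}) = ((−1)ⁿ/(n+1)) P(x)`. -/
theorem kailathSegall_minus_J (n : ℕ) (a : Fin n → ℝ)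
    (ha : Function.Injective a) (ha0 : ∀ j, a j ≠ 0) :
    (∀ x : ℕ → ℝ, ∀ y : Fin n → ℝ,
      (∀ k, 1 ≤ k → k ≤ n → x k = ∑ j, a j ^ k * y j) →
      KS x (n + 1) -
          KS (fun k => if k = n + 1 then ∑ j, a j ^ (n + 1) * y j else x k) (n + 1) =
        ((-1 : ℝ) ^ n / (n + 1)) *
          Lpoly (∏ j, (Polynomial.X - Polynomial.C (a j))) x) ∧
    (∀ x0 : ℝ, ∀ y : Fin n → ℝ,
      (∀ k, 1 ≤ k → k ≤ n → x0 ^ (k - 1) = ∑ j, a j ^ k * y j) →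
      KS (fun k => x0 ^ (k - 1)) (n + 1) -
          KS (fun k => if k = n + 1 then ∑ j, a j ^ (n + 1) * y j
            else x0 ^ (k - 1)) (n + 1) =
        ((-1 : ℝ) ^ n / (n + 1)) *
          Polynomial.eval x0 (∏ j, (Polynomial.X - Polynomial.C (a j)))) :=
  kailathSegall_minus_J_general n a
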